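/- arXiv:1503.03210 — 3 statements merged into one kernel-verified Lean document; each statement's English description precedes it below -/
import Mathlib

section
/- Let U be a real p×q matrix, let r be a positive integer with r ≤ min(p,q), and let I ⊆ {1,…,p} and J ⊆ {1,…,q} be index sets of cardinality r such that the r×r submatrix Û = U(I,J) is invertible and |det U(I,J)| ≥ |det U(I′,J′)| for every pair of index sets I′ ⊆ {1,…,p}, J′ ⊆ {1,…,q} of cardinality r. Define the cross approximation Ũ = U(:,J) · Û⁻¹ · U(I,:), where U(:,J) is the p×r matrix of the columns of U indexed by J and U(I,:) is the r×q matrix of the rows of U indexed by I. Then for every real p×q matrix V with rank(V) ≤ r one has max_{i,j} |U(i,j) − Ũ(i,j)| ≤ (r+1)·‖U − V‖₂, where ‖·‖₂ denotes the spectral (ℓ₂ operator) norm; consequently ‖U − Ũ‖_C ≤ (r+1)·min_{rank(V)≤r} ‖U − V‖₂ in the Chebyshev norm ‖X‖_C = max_{i,j}|X(i,j)|. -/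
/-!
Bordering `Û = U(I,J)` by the row `i` and the column `j` gives an `(r+1)×(r+1)` submatrix `B`
with `det B = det Û · E`, where `E = (U - Ũ)(i,j)` is a Schur complement. Every cofactor of `B` is
an `r×r` minor of `U`, hence at most `|det Û|` in modulus, so the entries of `B⁻¹` are at most
`1/|E|` and `‖B⁻¹‖₂ ≤ (r+1)/|E|`. The matching submatrix of `V` has rank at most `r`, so it is
singular, and a singular matrix is at spectral distance at least `1/‖B⁻¹‖₂` from `B`; that
distance is at most `‖U - V‖₂`.
-/

/-- The spectral (ℓ₂ operator) norm of a real `p×q` matrix. -/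
noncomputable def matSpectralNorm {p q : ℕ} (A : Matrix (Fin p) (Fin q) ℝ) : ℝ :=
  ‖LinearMap.toContinuousLinearMap (Matrix.toEuclideanLin A)‖

open scoped Matrix.Norms.L2Operator

theorem matSpectralNorm_eq_l2_opNorm {p q : ℕ} (A : Matrix (Fin p) (Fin q) ℝ) :
    matSpectralNorm A = ‖A‖ :=
  rfl

theorem Units.inv_norm_inv_le_norm_sub {R : Type*} [NormedRing R] [HasSummableGeomSeries R]
    (x : Rˣ) {y : R} (hy : ¬IsUnit y) : ‖(↑x⁻¹ : R)‖⁻¹ ≤ ‖y - x‖ :=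
  not_lt.1 fun h => hy (x.ofNearby y h).isUnit

namespace Matrix

variable {l m n o : Type*}

theorem injective_of_det_submatrix_ne_zero {R : Type*} [CommRing R] [Fintype l] [DecidableEq l]
    (A : Matrix m n R) {e : l → m} {f : l → n} (h : (A.submatrix e f).det ≠ 0) :
    Function.Injective e ∧ Function.Injective f := by
  refine ⟨fun a b hab => ?_, fun a b hab => ?_⟩ <;> by_contra hne <;> apply h
  · exact det_zero_of_row_eq hne (funext fun k => by simp [hab])
  · exact det_zero_of_column_eq hne (fun k => by simp [hab])

theorem det_submatrix_snoc {R : Type*} [CommRing R] {r : ℕ} (U : Matrix m n R)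
    (I : Fin r → m) (J : Fin r → n) (i : m) (j : n) (hinv : IsUnit (U.submatrix I J)) :
    (U.submatrix (Fin.snoc I i) (Fin.snoc J j)).det = (U.submatrix I J).det *
      (U i j - (U.submatrix id J * (U.submatrix I J)⁻¹ * U.submatrix I id) i j) := by
  let := hinv.invertible
  have hblocks : (U.submatrix (Fin.snoc I i) (Fin.snoc J j)).submatrix finSumFinEquiv
      finSumFinEquiv = fromBlocks (U.submatrix I J) (U.submatrix I fun _ : Fin 1 => j)
        (U.submatrix (fun _ : Fin 1 => i) J) (U.submatrix (fun _ => i) fun _ => j) := by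
    ext (a | a) (b | b) <;> simp [Fin.snoc]
  rw [← det_submatrix_equiv_self finSumFinEquiv, hblocks, det_fromBlocks₁₁, det_fin_one,
    invOf_eq_nonsing_inv]
  simp [mul_apply]

theorem abs_inv_apply_le_div {K : Type*} [Field K] [LinearOrder K] [IsStrictOrderedRing K] {k : ℕ}
    (A : Matrix (Fin (k + 1)) (Fin (k + 1)) K) {c : K}
    (hc : ∀ a b : Fin (k + 1), |(A.submatrix a.succAbove b.succAbove).det| ≤ c)
    (a b : Fin (k + 1)) :
    |A⁻¹ a b| ≤ c / |A.det| := by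
  rw [inv_def, smul_apply, smul_eq_mul, Ring.inverse_eq_inv', adjugate_fin_succ_eq_det_submatrix,
    abs_mul, abs_mul, abs_pow, abs_neg, abs_one, one_pow, one_mul, abs_inv, inv_mul_eq_div]
  exact div_le_div_of_nonneg_right (hc b a) (abs_nonneg _)

section L2OpNorm

variable {𝕜 : Type*} [RCLike 𝕜] [Fintype l] [Fintype m] [Fintype n] [Fintype o]

theorem l2_opNorm_one_submatrix_le [DecidableEq l] [DecidableEq m] {e : l → m}
    (he : Function.Injective e) : ‖(1 : Matrix m m 𝕜).submatrix e id‖ ≤ 1 := by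
  set P := (1 : Matrix m m 𝕜).submatrix e id
  have hPP : P * Pᴴ = 1 := by
    rw [conjTranspose_submatrix, conjTranspose_one, ← submatrix_mul _ _ _ _ _ Function.bijective_id,
      Matrix.one_mul, submatrix_one _ he]
  have hone : ‖(1 : Matrix l l 𝕜)‖ ≤ 1 := by
    rw [← l2_opNorm_toEuclideanCLM, map_one]
    exact ContinuousLinearMap.norm_id_le
  have : ‖P‖ * ‖P‖ ≤ 1 := by
    rw [← l2_opNorm_conjTranspose P, ← l2_opNorm_conjTranspose_mul_self,
      conjTranspose_conjTranspose, hPP]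
    exact hone
  nlinarith [norm_nonneg P]

theorem l2_opNorm_submatrix_le [DecidableEq l] [DecidableEq m] [DecidableEq n] [DecidableEq o]
    (A : Matrix m n 𝕜) {e : l → m} {f : o → n}
    (he : Function.Injective e) (hf : Function.Injective f) : ‖A.submatrix e f‖ ≤ ‖A‖ := by
  have hfac : A.submatrix e f =
      (1 : Matrix m m 𝕜).submatrix e id * A * ((1 : Matrix n n 𝕜).submatrix f id)ᴴ := by
    ext a b
    simp [conjTranspose_submatrix, mul_apply, one_apply]
  calc ‖A.submatrix e f‖
      ≤ ‖(1 : Matrix m m 𝕜).submatrix e id‖ * ‖A‖ * ‖(1 : Matrix n n 𝕜).submatrix f id‖ := by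
        rw [hfac, ← l2_opNorm_conjTranspose ((1 : Matrix n n 𝕜).submatrix f id)]
        exact (l2_opNorm_mul _ _).trans (by gcongr; exact l2_opNorm_mul _ _)
    _ ≤ 1 * ‖A‖ * 1 := by
        gcongr
        exacts [l2_opNorm_one_submatrix_le he, l2_opNorm_one_submatrix_le hf]
    _ = ‖A‖ := by ring

theorem l2_opNorm_le_sqrt_card_mul [DecidableEq n] (A : Matrix m n 𝕜) {c : ℝ} (hc : 0 ≤ c)
    (h : ∀ i j, ‖A i j‖ ≤ c) : ‖A‖ ≤ √(Fintype.card m * Fintype.card n) * c := by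
  rw [l2_opNorm_def]
  refine ContinuousLinearMap.opNorm_le_bound _ (by positivity) fun x => ?_
  have hrow : ∀ i, ‖(A *ᵥ x) i‖ ^ 2 ≤ Fintype.card n * c ^ 2 * ‖x‖ ^ 2 := fun i => calc
    ‖(A *ᵥ x) i‖ ^ 2 ≤ (∑ j, c * ‖x j‖) ^ 2 := by
      gcongr
      refine (norm_sum_le _ _).trans (Finset.sum_le_sum fun j _ => ?_)
      rw [norm_mul]
      gcongr
      exact h i j
    _ = c ^ 2 * (∑ j, ‖x j‖) ^ 2 := by rw [← Finset.mul_sum, mul_pow]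
    _ ≤ c ^ 2 * (Fintype.card n * ∑ j, ‖x j‖ ^ 2) := by
      gcongr
      exact sq_sum_le_card_mul_sum_sq
    _ = Fintype.card n * c ^ 2 * ‖x‖ ^ 2 := by rw [EuclideanSpace.norm_sq_eq]; ring
  refine le_of_pow_le_pow_left₀ two_ne_zero (by positivity) ?_
  calc _ = ∑ i, ‖(A *ᵥ x) i‖ ^ 2 := EuclideanSpace.norm_sq_eq _
    _ ≤ ∑ _i : m, Fintype.card n * c ^ 2 * ‖x‖ ^ 2 := Finset.sum_le_sum fun i _ => hrow i
    _ = (√(Fintype.card m * Fintype.card n) * c * ‖x‖) ^ 2 := by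
      rw [Finset.sum_const, Finset.card_univ, nsmul_eq_mul, mul_pow, mul_pow,
        Real.sq_sqrt (by positivity)]
      ring

end L2OpNorm

end Matrix

theorem maxvol_cross_approximation_general {p q r : ℕ}
    (U : Matrix (Fin p) (Fin q) ℝ)
    (I : Fin r → Fin p) (J : Fin r → Fin q)
    (hinv : IsUnit (U.submatrix I J))
    (hmaxvol : ∀ (I' : Fin r → Fin p) (J' : Fin r → Fin q),
      Function.Injective I' → Function.Injective J' →
      |(U.submatrix I' J').det| ≤ |(U.submatrix I J).det|)
    (V : Matrix (Fin p) (Fin q) ℝ) (hV : V.rank ≤ r) :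
    ∀ (i : Fin p) (j : Fin q),
      |U i j - (U.submatrix id J * (U.submatrix I J)⁻¹ * U.submatrix I id) i j|
        ≤ ((r : ℝ) + 1) * matSpectralNorm (U - V) := by
  intro i j
  rw [matSpectralNorm_eq_l2_opNorm]
  set E := U i j - (U.submatrix id J * (U.submatrix I J)⁻¹ * U.submatrix I id) i j
  set B := U.submatrix (Fin.snoc I i) (Fin.snoc J j)
  have hdetB : B.det = (U.submatrix I J).det * E := U.det_submatrix_snoc I J i j hinv
  rcases eq_or_ne E 0 with hE | hE
  · rw [hE, abs_zero]
    positivity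
  have hdetU : (U.submatrix I J).det ≠ 0 :=
    ((U.submatrix I J).isUnit_iff_isUnit_det.1 hinv).ne_zero
  have hdetB0 : B.det ≠ 0 := hdetB ▸ mul_ne_zero hdetU hE
  have hB : IsUnit B := B.isUnit_iff_isUnit_det.2 hdetB0.isUnit
  obtain ⟨hI', hJ'⟩ := U.injective_of_det_submatrix_ne_zero hdetB0
  have hBinv : ‖B⁻¹‖ ≤ (r + 1) / |E| := calc
    ‖B⁻¹‖ ≤ √((r + 1) * (r + 1)) * (|(U.submatrix I J).det| / |B.det|) := by
      simpa using B⁻¹.l2_opNorm_le_sqrt_card_mul (by positivity) (B.abs_inv_apply_le_div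
        fun a b => hmaxvol _ _ (hI'.comp a.succAbove_right_injective)
          (hJ'.comp b.succAbove_right_injective))
    _ = (r + 1) / |E| := by
      rw [hdetB, abs_mul, Real.sqrt_mul_self (by positivity)]
      field_simp
  have hW : ¬IsUnit (V.submatrix (Fin.snoc I i) (Fin.snoc J j)) := fun hunit => by
    have := (Matrix.rank_of_isUnit _ hunit).symm.trans_le ((V.rank_submatrix_le _ _).trans hV)
    simp at this
  have hdist : ‖B⁻¹‖⁻¹ ≤ ‖U - V‖ := calc
    ‖B⁻¹‖⁻¹ = ‖(↑hB.unit⁻¹ : Matrix (Fin (r + 1)) (Fin (r + 1)) ℝ)‖⁻¹ := by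
      rw [Matrix.coe_units_inv, hB.unit_spec]
    _ ≤ ‖(V - U).submatrix (Fin.snoc I i) (Fin.snoc J j)‖ :=
      hB.unit.inv_norm_inv_le_norm_sub hW
    _ ≤ ‖U - V‖ :=
      ((V - U).l2_opNorm_submatrix_le hI' hJ').trans_eq (norm_sub_rev V U)
  have hpos : 0 < ‖B⁻¹‖ := by
    simpa [Matrix.coe_units_inv] using Units.norm_pos hB.unit⁻¹
  have := (inv_anti₀ hpos hBinv).trans hdist
  rwa [inv_div, div_le_iff₀' (by positivity)] at this

/-- Maximum volume principle: if the `r×r` submatrix `Û = U(I,J)` is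
invertible and has maximal determinant modulus among all `r×r` submatrices of
`U`, then the cross approximation `Ũ = U(:,J) Û⁻¹ U(I,:)` satisfies
`|U(i,j) − Ũ(i,j)| ≤ (r+1)‖U − V‖₂` for every matrix `V` of rank at most `r`,
i.e. `‖U − Ũ‖_C ≤ (r+1) min_{rank V ≤ r} ‖U − V‖₂` in the Chebyshev norm. -/
theorem maxvol_cross_approximation {p q r : ℕ}
    (hr : 0 < r) (hrp : r ≤ p) (hrq : r ≤ q)
    (U : Matrix (Fin p) (Fin q) ℝ)
    (I : Fin r → Fin p) (J : Fin r → Fin q)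
    (hI : Function.Injective I) (hJ : Function.Injective J)
    (hinv : IsUnit (U.submatrix I J))
    (hmaxvol : ∀ (I' : Fin r → Fin p) (J' : Fin r → Fin q),
      Function.Injective I' → Function.Injective J' →
      |(U.submatrix I' J').det| ≤ |(U.submatrix I J).det|)
    (V : Matrix (Fin p) (Fin q) ℝ) (hV : V.rank ≤ r) :
    ∀ (i : Fin p) (j : Fin q),
      |U i j - (U.submatrix id J * (U.submatrix I J)⁻¹ * U.submatrix I id) i j|
        ≤ ((r : ℝ) + 1) * matSpectralNorm (U - V) :=
  maxvol_cross_approximation_general U I J hinv hmaxvol V hV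
end

section
/- Let U be a real p×q matrix with rank(U) ≤ r, and let I ⊆ {1,…,p}, J ⊆ {1,…,q} be index sets of cardinality r such that the r×r submatrix Û = U(I,J) is invertible. Then the skeleton (cross) decomposition is exact: U(i,j) = U(i,J) · Û⁻¹ · U(I,j) for all i ∈ {1,…,p}, j ∈ {1,…,q}, i.e. U = U(:,J) · U(I,J)⁻¹ · U(I,:). -/
/-!
Border the invertible pivot `U(I,J)` by one extra row `i` and column `j`. The bordered
`(r+1)×(r+1)` submatrix has rank at most `r`, so its determinant vanishes; by the Schur
complement formula this determinant is `det U(I,J) · (U(i,j) - U(i,J) U(I,J)⁻¹ U(I,j))`.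
-/

namespace Matrix

variable {K : Type*} [Field K] {m n ι : Type*} [Fintype ι] [DecidableEq ι]

theorem submatrix_sumElim_sumElim {α m₁ m₂ n₁ n₂ : Type*} (A : Matrix m n α)
    (r₁ : m₁ → m) (r₂ : m₂ → m) (c₁ : n₁ → n) (c₂ : n₂ → n) :
    A.submatrix (Sum.elim r₁ r₂) (Sum.elim c₁ c₂) =
      fromBlocks (A.submatrix r₁ c₁) (A.submatrix r₁ c₂) (A.submatrix r₂ c₁)
        (A.submatrix r₂ c₂) := by
  ext (a | a) (b | b) <;> rfl

theorem det_eq_zero_of_rank_lt {A : Matrix ι ι K} (h : A.rank < Fintype.card ι) : A.det = 0 :=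
  by_contra fun hdet => h.ne (rank_of_det_ne_zero hdet)

theorem det_submatrix_sumElim_eq_zero_of_rank_le [Fintype n] (A : Matrix m n K)
    (hrank : A.rank ≤ Fintype.card ι) (I : ι → m) (J : ι → n) (i : m) (j : n) :
    (A.submatrix (Sum.elim I fun _ : Unit => i) (Sum.elim J fun _ : Unit => j)).det = 0 :=
  det_eq_zero_of_rank_lt <| (rank_submatrix_le A _ _).trans_lt <| by
    rw [Fintype.card_sum, Fintype.card_unit]
    omega

theorem apply_eq_of_det_submatrix_sumElim_eq_zero (A : Matrix m n K) {I : ι → m} {J : ι → n}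
    (hpivot : IsUnit (A.submatrix I J)) {i : m} {j : n}
    (hdet : (A.submatrix (Sum.elim I fun _ : Unit => i) (Sum.elim J fun _ : Unit => j)).det = 0) :
    A i j = (A.submatrix id J * (A.submatrix I J)⁻¹ * A.submatrix I id) i j := by
  obtain ⟨_⟩ := hpivot.nonempty_invertible
  rw [submatrix_sumElim_sumElim, det_fromBlocks₁₁, invOf_eq_nonsing_inv] at hdet
  have hschur := (mul_eq_zero.mp hdet).resolve_left ((isUnit_iff_isUnit_det _).mp hpivot).ne_zero
  rw [det_unique, sub_apply, sub_eq_zero] at hschur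
  simpa [mul_apply] using hschur

end Matrix

theorem skeleton_decomposition_exact_general {p q r : ℕ}
    (U : Matrix (Fin p) (Fin q) ℝ) (hrank : U.rank ≤ r)
    (I : Fin r → Fin p) (J : Fin r → Fin q)
    (hinv : IsUnit (U.submatrix I J)) :
    U = U.submatrix id J * (U.submatrix I J)⁻¹ * U.submatrix I id := by
  ext i j
  refine U.apply_eq_of_det_submatrix_sumElim_eq_zero hinv ?_
  exact U.det_submatrix_sumElim_eq_zero_of_rank_le (by simpa using hrank) I J i j

/-- Skeleton (cross) decomposition is exact for matrices of rank at most `r`: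
if `U` has rank ≤ r and the `r×r` submatrix `U(I,J)` is invertible, then
`U = U(:,J) · U(I,J)⁻¹ · U(I,:)`. -/
theorem skeleton_decomposition_exact {p q r : ℕ}
    (U : Matrix (Fin p) (Fin q) ℝ) (hrank : U.rank ≤ r)
    (I : Fin r → Fin p) (J : Fin r → Fin q)
    (hI : Function.Injective I) (hJ : Function.Injective J)
    (hinv : IsUnit (U.submatrix I J)) :
    U = U.submatrix id J * (U.submatrix I J)⁻¹ * U.submatrix I id :=
  skeleton_decomposition_exact_general U hrank I J hinv
end

section
/- Let c ∈ (−1,1) and let ρ_c(x,y) = (1/(2π√(1−c²))) · exp(−(x² − 2cxy + y²)/(2(1−c²))) be the bivariate standard Gaussian density with correlation c. Then for all natural numbers i and j, ∫_{ℝ²} He_i(x) He_j(y) ρ_c(x,y) dx dy = δ_{i,j} · i! · cⁱ. -/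
open MeasureTheory Real

/-- Probabilists' Hermite polynomial `He_n` evaluated at a real point. -/
noncomputable def He (n : ℕ) (x : ℝ) : ℝ :=
  Polynomial.aeval x (Polynomial.hermite n)

/-- Bivariate standard Gaussian density with correlation `c`. -/
noncomputable def gaussρ₂ (c x y : ℝ) : ℝ :=
  (2 * Real.pi * Real.sqrt (1 - c ^ 2))⁻¹ *
    Real.exp (-(x ^ 2 - 2 * c * x * y + y ^ 2) / (2 * (1 - c ^ 2)))

/-!
Write `φ` for the standard Gaussian density. The density factors as
`ρ_c(x, y) = φ(x) · φ_{cx, 1 - c²}(y)`, where `φ_{m, v}` is the `𝓝(m, v)` density, so the inner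
integral is the expectation of `He_j` under `𝓝(cx, 1 - c²)`. Both remaining computations are driven
by Stein's identity `E[(Y - m) p(Y)] = v E[p'(Y)]` for `Y ∼ 𝓝(m, v)` and polynomial `p`, combined
with `He_{n+1} = X He_n - He_n'` and `He_{n+1}' = (n + 1) He_n`:
* under `𝓝(cx, 1 - c²)` it gives `E[He_{n+2}] = cx E[He_{n+1}] - c² (n + 1) E[He_n]`, which is the
  recurrence of `cⁿ He_n(x)`, so `E[He_j] = c^j He_j(x)`;
* under `𝓝(0, 1)` it gives `E[He_{k+1} q] = E[He_k q']`, hence `E[He_i He_j] = δ_{ij} i!`.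
-/

open Polynomial ProbabilityTheory
open scoped NNReal

namespace ProbabilityTheory

variable {μ : ℝ} {v : ℝ≥0}

lemma integrable_eval_gaussianReal (p : ℝ[X]) :
    Integrable (fun x ↦ p.eval x) (gaussianReal μ v) := by
  have hpow (n : ℕ) : Integrable (fun x : ℝ ↦ x ^ n) (gaussianReal μ v) :=
    ((memLp_id_gaussianReal n).integrable_norm_pow').mono' (by fun_prop)
      (.of_forall fun x ↦ by simp)
  simp_rw [eval_eq_sum_range]
  exact integrable_finsetSum _ fun i _ ↦ (hpow i).const_mul _

lemma integrable_gaussianPDFReal_smul_iff (hv : v ≠ 0) {f : ℝ → ℝ} :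
    Integrable (fun x ↦ gaussianPDFReal μ v x • f x) ↔ Integrable f (gaussianReal μ v) := by
  rw [gaussianReal_of_var_ne_zero μ hv, integrable_withDensity_iff_integrable_smul'
    (measurable_gaussianPDF μ v) (.of_forall fun _ ↦ gaussianPDF_lt_top)]
  simp_rw [toReal_gaussianPDF]

lemma hasDerivAt_gaussianPDFReal (x : ℝ) :
    HasDerivAt (gaussianPDFReal μ v) (-((x - μ) / v) * gaussianPDFReal μ v x) x := by
  have h := ((((hasDerivAt_id x).sub_const μ).pow 2).neg.div_const
    (2 * (v : ℝ))).exp.const_mul (√(2 * π * v))⁻¹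
  refine h.congr_deriv ?_
  simp only [gaussianPDFReal, id, Pi.pow_apply, Pi.neg_apply]
  ring

noncomputable def gaussianExpectation (μ : ℝ) (v : ℝ≥0) : ℝ[X] →ₗ[ℝ] ℝ where
  toFun p := ∫ x, p.eval x ∂gaussianReal μ v
  map_add' p q := by
    simp only [eval_add]
    exact integral_add (integrable_eval_gaussianReal p) (integrable_eval_gaussianReal q)
  map_smul' a p := by simp [integral_const_mul]

lemma gaussianExpectation_apply (p : ℝ[X]) :
    gaussianExpectation μ v p = ∫ x, p.eval x ∂gaussianReal μ v := rfl

theorem gaussianExpectation_X_sub_C_mul (p : ℝ[X]) :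
    gaussianExpectation μ v ((X - C μ) * p) = v * gaussianExpectation μ v (derivative p) := by
  by_cases hv : v = 0
  · simp [gaussianExpectation_apply, hv, gaussianReal_zero_var]
  have hE (q : ℝ[X]) : gaussianExpectation μ v q = ∫ x, gaussianPDFReal μ v x * q.eval x :=
    integral_gaussianReal_eq_integral_smul hv
  have hint (q : ℝ[X]) : Integrable (fun x ↦ gaussianPDFReal μ v x * q.eval x) :=
    (integrable_gaussianPDFReal_smul_iff hv).2 (integrable_eval_gaussianReal q)
  have hderiv (x : ℝ) : HasDerivAt (fun x ↦ gaussianPDFReal μ v x * p.eval x)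
      (gaussianPDFReal μ v x * (derivative p).eval x -
        (v : ℝ)⁻¹ * (gaussianPDFReal μ v x * ((X - C μ) * p).eval x)) x := by
    refine ((hasDerivAt_gaussianPDFReal x).mul (p.hasDerivAt x)).congr_deriv ?_
    simp only [eval_mul, eval_sub, eval_X, eval_C]
    ring
  have h := integral_eq_zero_of_hasDerivAt_of_integrable hderiv
    ((hint _).sub ((hint _).const_mul _)) (hint p)
  rw [integral_sub (hint _) ((hint _).const_mul _), integral_const_mul, sub_eq_zero] at h
  rw [hE, hE, h]
  field_simp

lemma gaussianExpectation_one : gaussianExpectation μ v 1 = 1 := by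
  simp [gaussianExpectation_apply]

theorem gaussianExpectation_X_mul_sub_derivative (p : ℝ[X]) :
    gaussianExpectation μ v (X * p - derivative p) =
      μ * gaussianExpectation μ v p + (v - 1) * gaussianExpectation μ v (derivative p) := by
  have h : X * p - derivative p = (X - C μ) * p + μ • p - derivative p := by
    rw [smul_eq_C_mul]; ring
  rw [h, map_sub, map_add, gaussianExpectation_X_sub_C_mul, map_smul, smul_eq_mul]
  ring

end ProbabilityTheory

namespace Polynomial

theorem derivative_hermite_succ (n : ℕ) : derivative (hermite (n + 1)) = (n + 1) • hermite n := by
  induction n with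
  | zero => simp
  | succ n ih =>
    rw [hermite_succ (n + 1), derivative_sub, derivative_mul, derivative_X, one_mul, ih,
      derivative_smul, mul_smul_comm, add_sub_assoc, ← smul_sub, ← hermite_succ, ← succ_nsmul']

end Polynomial

noncomputable def realHermite (n : ℕ) : ℝ[X] :=
  (hermite n).map (Int.castRingHom ℝ)

lemma eval_realHermite (n : ℕ) (x : ℝ) : (realHermite n).eval x = He n x := by
  rw [He, realHermite, eval_map, aeval_def, algebraMap_int_eq]

lemma realHermite_zero : realHermite 0 = 1 := by
  simp [realHermite]

lemma realHermite_succ (n : ℕ) :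
    realHermite (n + 1) = X * realHermite n - derivative (realHermite n) := by
  simp [realHermite, hermite_succ, derivative_map]

lemma derivative_realHermite_succ (n : ℕ) :
    derivative (realHermite (n + 1)) = (n + 1) • realHermite n := by
  rw [realHermite, derivative_map, derivative_hermite_succ]
  exact map_nsmul (mapRingHom (Int.castRingHom ℝ)) (n + 1) (hermite n)

lemma He_add_two (n : ℕ) (x : ℝ) : He (n + 2) x = x * He (n + 1) x - (n + 1) * He n x := by
  rw [← eval_realHermite, realHermite_succ (n + 1), derivative_realHermite_succ, eval_sub,
    eval_mul, eval_X, eval_smul, nsmul_eq_mul, eval_realHermite, eval_realHermite]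
  push_cast
  ring

theorem gaussianExpectation_realHermite_succ_mul (k : ℕ) (q : ℝ[X]) :
    gaussianExpectation 0 1 (realHermite (k + 1) * q) =
      gaussianExpectation 0 1 (realHermite k * derivative q) := by
  have h := gaussianExpectation_X_sub_C_mul (μ := 0) (v := 1) (realHermite k * q)
  rw [map_zero, sub_zero, NNReal.coe_one, one_mul, derivative_mul, map_add] at h
  rw [realHermite_succ, sub_mul, mul_assoc, map_sub, h, add_sub_cancel_left]

theorem gaussianExpectation_realHermite_mul_realHermite (i j : ℕ) :
    gaussianExpectation 0 1 (realHermite i * realHermite j) =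
      if i = j then (i.factorial : ℝ) else 0 := by
  induction i generalizing j with
  | zero =>
    cases j with
    | zero => simp [realHermite_zero, gaussianExpectation_one]
    | succ m =>
      rw [mul_comm, ← mul_one (realHermite (m + 1)), mul_assoc,
        gaussianExpectation_realHermite_succ_mul]
      simp [realHermite_zero]
  | succ k ih =>
    cases j with
    | zero =>
      rw [gaussianExpectation_realHermite_succ_mul, realHermite_zero, derivative_one]
      simp
    | succ m =>
      rw [gaussianExpectation_realHermite_succ_mul, derivative_realHermite_succ, mul_smul_comm,
        map_nsmul, ih, nsmul_eq_mul, Nat.factorial_succ]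
      split_ifs <;> simp_all

theorem gaussianExpectation_realHermite {c : ℝ} {v : ℝ≥0} (hv : (v : ℝ) = 1 - c ^ 2) (x : ℝ)
    (n : ℕ) : gaussianExpectation (c * x) v (realHermite n) = c ^ n * He n x := by
  have step (m : ℕ) : gaussianExpectation (c * x) v (realHermite (m + 2)) =
      c * x * gaussianExpectation (c * x) v (realHermite (m + 1)) -
        c ^ 2 * (m + 1) * gaussianExpectation (c * x) v (realHermite m) := by
    rw [realHermite_succ (m + 1), gaussianExpectation_X_mul_sub_derivative,
      derivative_realHermite_succ, map_nsmul, nsmul_eq_mul, hv]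
    push_cast
    ring
  induction n using Nat.twoStepInduction with
  | zero => simp [realHermite_zero, gaussianExpectation_one, He]
  | one =>
    rw [realHermite_succ, gaussianExpectation_X_mul_sub_derivative, realHermite_zero,
      derivative_one, map_zero, gaussianExpectation_one]
    simp [He]
  | more m ih ih' => rw [step, ih, ih', He_add_two]; ring

lemma gaussρ₂_eq_gaussianPDFReal_mul {c : ℝ} {v : ℝ≥0} (hv : (v : ℝ) = 1 - c ^ 2) (x y : ℝ) :
    gaussρ₂ c x y = gaussianPDFReal 0 1 x * gaussianPDFReal (c * x) v y := by
  obtain hs | hs := (hv ▸ v.coe_nonneg : 0 ≤ 1 - c ^ 2).lt_or_eq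
  swap
  · simp [gaussρ₂, gaussianPDFReal, hv, ← hs]
  have hsqrt : √(2 * π * 1) * √(2 * π * (1 - c ^ 2)) = 2 * π * √(1 - c ^ 2) := by
    rw [← sqrt_mul (by positivity), show 2 * π * 1 * (2 * π * (1 - c ^ 2)) =
      (2 * π) ^ 2 * (1 - c ^ 2) by ring, sqrt_mul (by positivity), sqrt_sq (by positivity)]
  simp only [gaussρ₂, gaussianPDFReal, NNReal.coe_one, hv, sub_zero]
  rw [mul_mul_mul_comm, ← exp_add, ← mul_inv, hsqrt]
  congr 2
  field_simp
  ring

lemma integral_He_mul_gaussρ₂ {c : ℝ} (hc : c ^ 2 < 1) (j : ℕ) (x : ℝ) :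
    ∫ y, He j y * gaussρ₂ c x y = c ^ j * He j x * gaussianPDFReal 0 1 x := by
  obtain ⟨v, hv⟩ : ∃ v : ℝ≥0, (v : ℝ) = 1 - c ^ 2 := ⟨⟨1 - c ^ 2, by linarith⟩, rfl⟩
  have hv₀ : v ≠ 0 := by rw [← NNReal.coe_ne_zero, hv]; linarith
  calc ∫ y, He j y * gaussρ₂ c x y
      = gaussianPDFReal 0 1 x * ∫ y, gaussianPDFReal (c * x) v y • (realHermite j).eval y := by
        rw [← integral_const_mul]
        congr with y
        rw [gaussρ₂_eq_gaussianPDFReal_mul hv, eval_realHermite, smul_eq_mul]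
        ring
    _ = _ := by
        rw [← integral_gaussianReal_eq_integral_smul hv₀, ← gaussianExpectation_apply,
          gaussianExpectation_realHermite hv]
        ring

/-- Mehler-type orthogonality: for a correlated bivariate standard Gaussian
density with correlation `c ∈ (−1,1)`,
`∫∫ He_i(x) He_j(y) ρ_c(x,y) dx dy = δ_{i,j} i! cⁱ`. -/
theorem hermite_correlated_orthogonality (c : ℝ) (hc : c ∈ Set.Ioo (-1 : ℝ) 1)
    (i j : ℕ) :
    (∫ x : ℝ, ∫ y : ℝ, He i x * He j y * gaussρ₂ c x y) =
      if i = j then (Nat.factorial i : ℝ) * c ^ i else 0 := by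
  have hc2 : c ^ 2 < 1 := (sq_lt_one_iff_abs_lt_one c).2 (abs_lt.2 hc)
  calc _ = ∫ x, c ^ j * (gaussianPDFReal 0 1 x • (realHermite i * realHermite j).eval x) := by
        congr with x
        simp_rw [mul_assoc, integral_const_mul, integral_He_mul_gaussρ₂ hc2, eval_mul,
          eval_realHermite, smul_eq_mul]
        ring
    _ = c ^ j * gaussianExpectation 0 1 (realHermite i * realHermite j) := by
        rw [integral_const_mul, gaussianExpectation_apply,
          integral_gaussianReal_eq_integral_smul one_ne_zero]
    _ = _ := by
        rw [gaussianExpectation_realHermite_mul_realHermite]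
        split_ifs with h
        · subst h; ring
        · simp
end
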